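/- If every acyclic complex of injective right R-modules is semi-injective, then every acyclic complex of flat left R-modules is pure acyclic. -/

import Mathlib

open CategoryTheory CategoryTheory.Limits ZeroObject

noncomputable section

/-! ### The balanced tensor product `M ⊗_R N` of a right `R`-module `M` and a left
`R`-module `N`, defined as a quotient of `M ⊗_ℤ N`. -/

section Bal

variable (R : Type) [Ring R]
variable (M : Type) [AddCommGroup M] [Module Rᵐᵒᵖ M]
variable (N : Type) [AddCommGroup N] [Module R N]

/-- The subgroup of balancing relations in `M ⊗_ℤ N`. -/
def balRel : Submodule ℤ (TensorProduct ℤ M N) :=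
  Submodule.span ℤ { x | ∃ (r : R) (m : M) (n : N),
    x = (MulOpposite.op r • m) ⊗ₜ[ℤ] n - m ⊗ₜ[ℤ] (r • n) }

/-- The balanced tensor product `M ⊗_R N` of a right `R`-module `M` and a left
`R`-module `N`, as an abelian group (ℤ-module). -/
abbrev Bal := TensorProduct ℤ M N ⧸ balRel R M N

variable {M N}
variable {M' M'' : Type} [AddCommGroup M'] [Module Rᵐᵒᵖ M'] [AddCommGroup M''] [Module Rᵐᵒᵖ M'']
variable {N' N'' : Type} [AddCommGroup N'] [Module R N'] [AddCommGroup N''] [Module R N'']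

/-- Functoriality of the balanced tensor product. -/
def Bal.map (f : M →ₗ[Rᵐᵒᵖ] M') (g : N →ₗ[R] N') :
    Bal R M N →ₗ[ℤ] Bal R M' N' :=
  Submodule.mapQ _ _ (TensorProduct.map (f.restrictScalars ℤ) (g.restrictScalars ℤ)) (by
    rw [balRel, Submodule.span_le]
    rintro x ⟨r, m, n, rfl⟩
    refine Submodule.subset_span ?_
    exact ⟨r, f m, g n, by
      erw [map_sub, TensorProduct.map_tmul, TensorProduct.map_tmul]
      simp [map_smul]⟩)

@[simp] lemma Bal.map_mk (f : M →ₗ[Rᵐᵒᵖ] M') (g : N →ₗ[R] N') (m : M) (n : N) :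
    Bal.map R f g (Submodule.Quotient.mk (m ⊗ₜ[ℤ] n)) =
      Submodule.Quotient.mk (f m ⊗ₜ[ℤ] g n) := by
  rfl

lemma Bal.hom_ext {P : Type} [AddCommGroup P] [Module ℤ P]
    {h h' : Bal R M N →ₗ[ℤ] P}
    (H : ∀ (m : M) (n : N), h (Submodule.Quotient.mk (m ⊗ₜ[ℤ] n)) =
      h' (Submodule.Quotient.mk (m ⊗ₜ[ℤ] n))) : h = h' := by
  apply Submodule.linearMap_qext
  exact TensorProduct.ext' H

lemma Bal.map_id :
    Bal.map R (LinearMap.id : M →ₗ[Rᵐᵒᵖ] M) (LinearMap.id : N →ₗ[R] N) = LinearMap.id := by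
  apply Bal.hom_ext; intro m n; rw [Bal.map_mk]; rfl

lemma Bal.map_comp (f : M →ₗ[Rᵐᵒᵖ] M') (f' : M' →ₗ[Rᵐᵒᵖ] M'')
    (g : N →ₗ[R] N') (g' : N' →ₗ[R] N'') :
    Bal.map R (f'.comp f) (g'.comp g) = (Bal.map R f' g').comp (Bal.map R f g) := by
  apply Bal.hom_ext; intro m n
  simp

lemma Bal.map_add_left (f f' : M →ₗ[Rᵐᵒᵖ] M') (g : N →ₗ[R] N') :
    Bal.map R (f + f') g = Bal.map R f g + Bal.map R f' g := by
  apply Bal.hom_ext; intro m n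
  simp [← Submodule.Quotient.mk_add, ← TensorProduct.add_tmul]

lemma Bal.map_add_right (f : M →ₗ[Rᵐᵒᵖ] M') (g g' : N →ₗ[R] N') :
    Bal.map R f (g + g') = Bal.map R f g + Bal.map R f g' := by
  apply Bal.hom_ext; intro m n
  simp [← Submodule.Quotient.mk_add, ← TensorProduct.tmul_add]

end Bal

/-! ### The balanced tensor product as a bifunctor -/

section balFunctor

variable (R : Type) [Ring R]

/-- The balanced tensor product bifunctor `ModuleCat Rᵐᵒᵖ ⥤ ModuleCat R ⥤ ModuleCat ℤ`. -/
def balFunctor : ModuleCat.{0} Rᵐᵒᵖ ⥤ ModuleCat.{0} R ⥤ ModuleCat.{0} ℤ where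
  obj M :=
    { obj := fun N => ModuleCat.of ℤ (Bal R M N)
      map := fun {N N'} g => ModuleCat.ofHom (Bal.map R LinearMap.id g.hom)
      map_id := fun N => by
        ext1
        exact Bal.map_id R
      map_comp := fun {N₁ N₂ N₃} g g' => by
        ext1
        have := Bal.map_comp R (LinearMap.id : M →ₗ[Rᵐᵒᵖ] M) LinearMap.id g.hom g'.hom
        rw [LinearMap.id_comp] at this
        exact this }
  map {M M'} f :=
    { app := fun N => ModuleCat.ofHom (Bal.map R f.hom LinearMap.id)
      naturality := fun {N N'} g => by
        ext1
        show (Bal.map R f.hom LinearMap.id).comp (Bal.map R LinearMap.id g.hom)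
          = (Bal.map R LinearMap.id g.hom).comp (Bal.map R f.hom LinearMap.id)
        rw [← Bal.map_comp, ← Bal.map_comp]
        simp }
  map_id M := by
    ext N : 2
    ext1
    exact Bal.map_id R
  map_comp {M₁ M₂ M₃} f f' := by
    ext N : 2
    ext1
    show Bal.map R (f'.hom.comp f.hom) _
      = (Bal.map R f'.hom LinearMap.id).comp (Bal.map R f.hom LinearMap.id)
    rw [← Bal.map_comp]
    simp

instance balFunctor_additive : (balFunctor R).Additive where
  map_add {M M'} {f f'} := by
    ext N : 2
    ext1
    exact Bal.map_add_left R f.hom f'.hom LinearMap.id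

instance balFunctor_obj_additive (M : ModuleCat.{0} Rᵐᵒᵖ) :
    ((balFunctor R).obj M).Additive where
  map_add {N N'} {g g'} := by
    ext1
    exact Bal.map_add_right R LinearMap.id g.hom g'.hom

end balFunctor

/-! ### Module-theoretic notions over a not necessarily commutative ring.
Right `R`-modules are treated as (left) modules over the opposite ring `Rᵐᵒᵖ`. -/

section ModuleNotions

variable (R : Type) [Ring R]

/-- A left `R`-module `N` is flat if tensoring with it preserves injectivity of maps of
right `R`-modules. -/
def FlatModule (N : Type) [AddCommGroup N] [Module R N] : Prop :=
  ∀ (M M' : Type) [AddCommGroup M] [Module Rᵐᵒᵖ M] [AddCommGroup M'] [Module Rᵐᵒᵖ M']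
    (f : M →ₗ[Rᵐᵒᵖ] M'), Function.Injective f →
      Function.Injective (Bal.map R f (LinearMap.id : N →ₗ[R] N))

/-- Vanishing of `Ext¹_R(X, Y)`, expressed by the splitting of every short exact
sequence `0 → Y → E → X → 0`. -/
def ext1Zero (X Y : Type) [AddCommGroup X] [Module R X] [AddCommGroup Y] [Module R Y] :
    Prop :=
  ∀ (E : Type) [AddCommGroup E] [Module R E] (i : Y →ₗ[R] E) (p : E →ₗ[R] X),
    Function.Injective i → Function.Surjective p → Function.Exact i p →
      ∃ s : X →ₗ[R] E, p.comp s = LinearMap.id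

/-- A left `R`-module `C` is cotorsion if `Ext¹_R(F, C) = 0` for every flat left
`R`-module `F`. -/
def CotorsionModule (C : Type) [AddCommGroup C] [Module R C] : Prop :=
  ∀ (F : Type) [AddCommGroup F] [Module R F], FlatModule R F → ext1Zero R F C

/-- A left `R`-module `E` is fp-injective if `Ext¹_R(F, E) = 0` for every finitely
presented left `R`-module `F`. -/
def FpInjectiveModule (E : Type) [AddCommGroup E] [Module R E] : Prop :=
  ∀ (F : Type) [AddCommGroup F] [Module R F],
    Module.FinitePresentation R F → ext1Zero R F E

/-- A left `R`-module `P` is fp-projective if `Ext¹_R(P, E) = 0` for every fp-injective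
left `R`-module `E`. -/
def FpProjectiveModule (P : Type) [AddCommGroup P] [Module R P] : Prop :=
  ∀ (E : Type) [AddCommGroup E] [Module R E], FpInjectiveModule R E → ext1Zero R P E

/-- `ProjDimLE R n M` says that the left `R`-module `M` has projective dimension at
most `n`, i.e. it admits a projective resolution of length `n`. -/
def ProjDimLE : ℕ → ∀ (M : Type) [AddCommGroup M] [Module R M], Prop
  | 0 => fun M _ _ => Module.Projective R M
  | n + 1 => fun M _ _ =>
      ∃ (P : Type) (_ : AddCommGroup P) (_ : Module R P) (p : P →ₗ[R] M),
        Module.Projective R P ∧ Function.Surjective p ∧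
          ProjDimLE n (LinearMap.ker p)

/-- A left `R`-module has finite projective dimension if it admits a finite projective
resolution. -/
def FiniteProjDim (M : Type) [AddCommGroup M] [Module R M] : Prop :=
  ∃ n : ℕ, ProjDimLE R n M

/-- `FlatDimLE R n M` says that the left `R`-module `M` has flat dimension at most `n`,
i.e. it admits a flat resolution of length `n`. -/
def FlatDimLE : ℕ → ∀ (M : Type) [AddCommGroup M] [Module R M], Prop
  | 0 => fun M _ _ => FlatModule R M
  | n + 1 => fun M _ _ =>
      ∃ (F : Type) (_ : AddCommGroup F) (_ : Module R F) (p : F →ₗ[R] M),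
        FlatModule R F ∧ Function.Surjective p ∧
          FlatDimLE n (LinearMap.ker p)

/-- A left `R`-module has finite flat dimension if it admits a finite flat resolution. -/
def FiniteFlatDim (M : Type) [AddCommGroup M] [Module R M] : Prop :=
  ∃ n : ℕ, FlatDimLE R n M

/-- `R` is right coherent: every finitely generated right ideal of `R` is finitely
presented as a right `R`-module. -/
def RightCoherent : Prop :=
  ∀ I : Submodule Rᵐᵒᵖ R, I.FG → Module.FinitePresentation Rᵐᵒᵖ I

/-- `R` is right regular: every finitely generated right ideal of `R` has finite
projective dimension as a right `R`-module. -/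
def RightRegular : Prop :=
  ∀ I : Submodule Rᵐᵒᵖ R, I.FG → FiniteProjDim Rᵐᵒᵖ I

/-- `R` is left coherent: every finitely generated left ideal of `R` is finitely
presented as a left `R`-module. -/
def LeftCoherent : Prop :=
  ∀ I : Submodule R R, I.FG → Module.FinitePresentation R I

/-- `R` is left regular: every finitely generated left ideal of `R` has finite
projective dimension as a left `R`-module. -/
def LeftRegular : Prop :=
  ∀ I : Submodule R R, I.FG → FiniteProjDim R I

/-- `R` is von Neumann regular if every element `a` has a quasi-inverse `b` with
`a * b * a = a`. -/
def VonNeumannRegular : Prop := ∀ a : R, ∃ b : R, a * b * a = a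

/-- An object `M` of `ModuleCat A` admits a projective resolution by degreewise
finitely generated projective modules. -/
def HasDegreewiseFGProjectiveResolution {A : Type} [Ring A] (M : ModuleCat.{0} A) : Prop :=
  ∃ res : ProjectiveResolution M, ∀ n : ℕ, Module.Finite A (res.complex.X n)

end ModuleNotions

/-! ### Complexes -/

section Complexes

variable (A : Type) [Ring A]

/-- Unbounded (cochain) complexes of modules. -/
abbrev Cx := CochainComplex (ModuleCat.{0} A) ℤ

/-- A complex is acyclic if it is exact in every degree. -/
def IsAcyclic (C : Cx A) : Prop := ∀ n : ℤ, C.ExactAt n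

/-- Acyclicity for complexes of abelian groups. -/
def IsAcyclicAb (C : CochainComplex AddCommGrpCat.{0} ℤ) : Prop := ∀ n : ℤ, C.ExactAt n

/-- Acyclicity for complexes of ℤ-modules. -/
def IsAcyclicZMod (C : CochainComplex (ModuleCat.{0} ℤ) ℤ) : Prop := ∀ n : ℤ, C.ExactAt n

/-- A complex is contractible if it is homotopy equivalent to the zero complex. -/
def IsContractible (C : Cx A) : Prop := Nonempty (HomotopyEquiv C (0 : Cx A))

variable {A}

/-- A complex `P` is semi-projective if it consists of projective modules and the total
Hom complex `Hom(P, C)` is acyclic for every acyclic complex `C`. -/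
def SemiProjective (P : Cx A) : Prop :=
  (∀ n : ℤ, Module.Projective A (P.X n)) ∧
  ∀ C : Cx A, IsAcyclic A C → IsAcyclicAb (CochainComplex.HomComplex P C)

/-- A complex `I` is semi-injective if it consists of injective modules and the total
Hom complex `Hom(C, I)` is acyclic for every acyclic complex `C`. -/
def SemiInjective (I : Cx A) : Prop :=
  (∀ n : ℤ, Module.Injective A (I.X n)) ∧
  ∀ C : Cx A, IsAcyclic A C → IsAcyclicAb (CochainComplex.HomComplex C I)

variable (A)

/-- A complex `E` (of right modules, say) is semi-fp-injective if it consists of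
fp-injective modules and the total Hom complex `Hom(X, E)` is acyclic for every acyclic
complex `X` whose cycle modules are all fp-projective. -/
def SemiFpInjective (E : Cx A) : Prop :=
  (∀ n : ℤ, FpInjectiveModule A (E.X n)) ∧
  ∀ X : Cx A, IsAcyclic A X → (∀ n : ℤ, FpProjectiveModule A (X.cycles n)) →
    IsAcyclicAb (CochainComplex.HomComplex X E)

variable {A}

end Complexes

section TensorComplexes

variable (R : Type) [Ring R]

/-- The total tensor complex `K ⊗_R L` of a complex `K` of right `R`-modules and a
complex `L` of left `R`-modules. -/
def tensorComplex (K : Cx Rᵐᵒᵖ) (L : Cx R) : CochainComplex (ModuleCat.{0} ℤ) ℤ :=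
  HomologicalComplex.mapBifunctor K L (balFunctor R) (ComplexShape.up ℤ)

/-- A complex `F` of left `R`-modules is semi-flat if it consists of flat modules and
the tensor complex `K ⊗_R F` is acyclic for every acyclic complex `K` of right
`R`-modules. -/
def SemiFlat (F : Cx R) : Prop :=
  (∀ n : ℤ, FlatModule R (F.X n)) ∧
  ∀ K : Cx Rᵐᵒᵖ, IsAcyclic Rᵐᵒᵖ K → IsAcyclicZMod (tensorComplex R K F)

/-- An acyclic complex `X` of left `R`-modules is pure acyclic if each short exact
sequence `0 → Z^n(X) → X^n → Z^{n+1}(X) → 0` of cycle modules is pure exact, i.e.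
stays a short exact sequence after tensoring with every right `R`-module `M`. -/
def PureAcyclic (X : Cx R) : Prop :=
  IsAcyclic R X ∧
  ∀ (n : ℤ) (M : ModuleCat.{0} Rᵐᵒᵖ),
    Function.Injective (((balFunctor R).obj M).map (X.iCycles n)) ∧
    Function.Exact (((balFunctor R).obj M).map (X.iCycles n))
      (((balFunctor R).obj M).map (X.toCycles n (n + 1))) ∧
    Function.Surjective (((balFunctor R).obj M).map (X.toCycles n (n + 1)))

/-- `S ⊗_R -` is exact and reflects exactness, where `S` is a right `R`-module. -/
def FaithfullyFlatRight (S : Type) [AddCommGroup S] [Module Rᵐᵒᵖ S] : Prop :=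
  ∀ (N₁ N₂ N₃ : Type) [AddCommGroup N₁] [Module R N₁] [AddCommGroup N₂] [Module R N₂]
    [AddCommGroup N₃] [Module R N₃] (g₁ : N₁ →ₗ[R] N₂) (g₂ : N₂ →ₗ[R] N₃),
    Function.Exact g₁ g₂ ↔
      Function.Exact (Bal.map R (LinearMap.id : S →ₗ[Rᵐᵒᵖ] S) g₁)
        (Bal.map R (LinearMap.id : S →ₗ[Rᵐᵒᵖ] S) g₂)

end TensorComplexes

/-!
Write `⁺ = Hom_ℤ(-, ℚ/ℤ)`. For an acyclic complex `F` of flat left modules, `F⁺` is an acyclic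
complex of injective right modules, hence semi-injective by hypothesis, and exactness of
`Hom(F⁺, F⁺)` in degree `0` makes `𝟙 F⁺` null-homotopic. A contracting homotopy `h` splits the
dual `(F^n)⁺ → (Z^n)⁺` of each cycle inclusion: `φ ↦ h(φ ∘ toCycles)`. Through the adjunction
`(M ⊗_R N)⁺ ≃ Hom_R(M, N⁺)`, that splitting makes `(M ⊗ F^n)⁺ → (M ⊗ Z^n)⁺` surjective, i.e.
`M ⊗ Z^n → M ⊗ F^n` injective, for every right module `M`. Exactness in the middle and
surjectivity on the right hold for any exact sequence by right exactness of `M ⊗_R -`.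
-/

namespace CharacterModule

variable {A B C : Type} [AddCommGroup A] [AddCommGroup B] [AddCommGroup C]

@[simp] lemma add_apply (c c' : CharacterModule A) (a : A) : (c + c') a = c a + c' a := rfl

@[simp] lemma zsmul_apply (z : ℤ) (c : CharacterModule A) (a : A) : (z • c) a = z • c a := rfl

instance instModuleMulOpposite {R : Type} [Ring R] (N : Type) [AddCommGroup N] [Module R N] :
    Module Rᵐᵒᵖ (CharacterModule N) where
  smul r c := c.comp (DistribSMul.toAddMonoidHom N r.unop)
  one_smul c := DFunLike.ext _ _ fun n => congrArg c (one_smul R n)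
  mul_smul r s c := DFunLike.ext _ _ fun n => congrArg c (mul_smul s.unop r.unop n)
  smul_zero _ := rfl
  smul_add _ _ _ := rfl
  add_smul r s c := DFunLike.ext _ _ fun n =>
    (congrArg c (add_smul r.unop s.unop n)).trans (map_add c _ _)
  zero_smul c := DFunLike.ext _ _ fun n => (congrArg c (zero_smul R n)).trans (map_zero c)

lemma dual_exact {f : A →ₗ[ℤ] B} {g : B →ₗ[ℤ] C} (h : Function.Exact f g) :
    Function.Exact (dual g) (dual f) := by
  refine fun c => ⟨fun hc => ?_, ?_⟩
  · have hker : LinearMap.range f ≤ LinearMap.ker c.toIntLinearMap := by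
      rintro _ ⟨a, rfl⟩
      exact DFunLike.congr_fun hc a
    have h' : Function.Exact f g.rangeRestrict :=
      (Submodule.injective_subtype _).comp_exact_iff_exact.mp h
    let e := h'.linearEquivOfSurjective g.surjective_rangeRestrict
    obtain ⟨c', hc'⟩ := dual_surjective_of_injective _ (Submodule.injective_subtype _)
      (((LinearMap.range f).liftQ c.toIntLinearMap hker) ∘ₗ e.symm.toLinearMap).toAddMonoidHom
    refine ⟨c', DFunLike.ext _ _ fun b => ?_⟩
    have key := DFunLike.congr_fun hc' (g.rangeRestrict b)
    change c' (g b) = (LinearMap.range f).liftQ c.toIntLinearMap hker (e.symm (g.rangeRestrict b))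
      at key
    rwa [h'.linearEquivOfSurjective_symm_apply, Submodule.liftQ_apply] at key
  · rintro ⟨c', rfl⟩
    refine DFunLike.ext _ _ fun a => ?_
    change c' (g (f a)) = 0
    rw [h.apply_apply_eq_zero, map_zero]

end CharacterModule

namespace LinearMap

variable {R : Type} [Ring R] {N N' N'' : Type} [AddCommGroup N] [Module R N]
  [AddCommGroup N'] [Module R N'] [AddCommGroup N''] [Module R N'']

def characterDual (f : N →ₗ[R] N') : CharacterModule N' →ₗ[Rᵐᵒᵖ] CharacterModule N where
  toFun c := c.comp f.toAddMonoidHom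
  map_add' _ _ := rfl
  map_smul' r c := DFunLike.ext _ _ fun n => (congrArg c (f.map_smul r.unop n)).symm

lemma characterDual_comp (f : N →ₗ[R] N') (g : N' →ₗ[R] N'') :
    (g ∘ₗ f).characterDual = f.characterDual ∘ₗ g.characterDual := rfl

@[simp] lemma characterDual_zero : (0 : N →ₗ[R] N').characterDual = 0 :=
  LinearMap.ext fun c => DFunLike.ext _ _ fun _ => map_zero c

lemma characterDual_exact {f : N →ₗ[R] N'} {g : N' →ₗ[R] N''} (h : Function.Exact f g) :
    Function.Exact g.characterDual f.characterDual :=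
  CharacterModule.dual_exact (f := f.toAddMonoidHom.toIntLinearMap)
    (g := g.toAddMonoidHom.toIntLinearMap) h

end LinearMap

namespace Bal

variable (R : Type) [Ring R]
variable {M M' N N' N'' : Type} [AddCommGroup M] [Module Rᵐᵒᵖ M] [AddCommGroup M'] [Module Rᵐᵒᵖ M']
  [AddCommGroup N] [Module R N] [AddCommGroup N'] [Module R N'] [AddCommGroup N''] [Module R N'']

lemma mk_op_smul_tmul (r : R) (m : M) (n : N) :
    (Submodule.Quotient.mk ((MulOpposite.op r • m) ⊗ₜ[ℤ] n) : Bal R M N) =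
      Submodule.Quotient.mk (m ⊗ₜ[ℤ] (r • n)) :=
  (Submodule.Quotient.eq _).mpr (Submodule.subset_span ⟨r, m, n, rfl⟩)

lemma character_ext {c c' : CharacterModule (Bal R M N)}
    (H : ∀ m n, c (Submodule.Quotient.mk (m ⊗ₜ[ℤ] n)) = c' (Submodule.Quotient.mk (m ⊗ₜ[ℤ] n))) :
    c = c' := by
  refine DFunLike.ext _ _ fun x => ?_
  obtain ⟨x, rfl⟩ := Submodule.Quotient.mk_surjective _ x
  induction x using TensorProduct.induction_on with
  | zero => rw [Submodule.Quotient.mk_zero, map_zero, map_zero]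
  | tmul m n => exact H m n
  | add x y hx hy => rw [Submodule.Quotient.mk_add, map_add, map_add, hx, hy]

def characterEquiv : CharacterModule (Bal R M N) ≃ (M →ₗ[Rᵐᵒᵖ] CharacterModule N) where
  toFun c :=
    { toFun m :=
        { toFun n := c (Submodule.Quotient.mk (m ⊗ₜ[ℤ] n))
          map_zero' := by rw [TensorProduct.tmul_zero, Submodule.Quotient.mk_zero, map_zero]
          map_add' n n' := by
            rw [TensorProduct.tmul_add, Submodule.Quotient.mk_add, map_add] }
      map_add' m m' := DFunLike.ext _ _ fun n => by
        change c _ = c _ + c _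
        rw [TensorProduct.add_tmul, Submodule.Quotient.mk_add, map_add]
      map_smul' r m := DFunLike.ext _ _ fun n =>
        congrArg c (mk_op_smul_tmul R r.unop m n) }
  invFun φ := ((balRel R M N).liftQ
    (TensorProduct.lift
      (LinearMap.mk₂ ℤ (fun m n => φ m n) (by simp) (by simp) (by simp) (by simp)))
    (by
      rw [balRel, Submodule.span_le]
      rintro _ ⟨r, m, n, rfl⟩
      refine LinearMap.mem_ker.mpr ((map_sub _ _ _).trans (sub_eq_zero.mpr ?_))
      exact DFunLike.congr_fun (map_smul φ (MulOpposite.op r) m) n)).toAddMonoidHom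
  left_inv c := character_ext R fun _ _ => rfl
  right_inv φ := rfl

lemma characterEquiv_dual_map (f : M →ₗ[Rᵐᵒᵖ] M') (g : N →ₗ[R] N')
    (c : CharacterModule (Bal R M' N')) :
    characterEquiv R (CharacterModule.dual (Bal.map R f g) c) =
      g.characterDual ∘ₗ characterEquiv R c ∘ₗ f := rfl

lemma map_injective_of_characterDual_comp_eq_id (g : N →ₗ[R] N')
    {s : CharacterModule N →ₗ[Rᵐᵒᵖ] CharacterModule N'} (hs : g.characterDual ∘ₗ s = LinearMap.id) :
    Function.Injective (Bal.map R (LinearMap.id : M →ₗ[Rᵐᵒᵖ] M) g) := by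
  rw [← CharacterModule.dual_surjective_iff_injective]
  intro c
  refine ⟨(characterEquiv R).symm (s ∘ₗ characterEquiv R c), (characterEquiv R).injective ?_⟩
  rw [characterEquiv_dual_map, Equiv.apply_symm_apply, LinearMap.comp_id, ← LinearMap.comp_assoc,
    hs, LinearMap.id_comp]

lemma map_surjective {f : M →ₗ[Rᵐᵒᵖ] M'} {g : N →ₗ[R] N'} (hf : Function.Surjective f)
    (hg : Function.Surjective g) : Function.Surjective (Bal.map R f g) := by
  intro x
  obtain ⟨x, rfl⟩ := Submodule.Quotient.mk_surjective _ x
  obtain ⟨y, rfl⟩ := TensorProduct.map_surjective (g := f.restrictScalars ℤ)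
    (g' := g.restrictScalars ℤ) hf hg x
  exact ⟨Submodule.Quotient.mk y, rfl⟩

lemma map_id_mk (g : N →ₗ[R] N') (x : TensorProduct ℤ M N) :
    Bal.map R (LinearMap.id : M →ₗ[Rᵐᵒᵖ] M) g (Submodule.Quotient.mk x) =
      Submodule.Quotient.mk ((g.restrictScalars ℤ).lTensor M x) := rfl

lemma exists_mem_balRel_lTensor_eq {g : N →ₗ[R] N'} (hg : Function.Surjective g)
    {x : TensorProduct ℤ M N'} (hx : x ∈ balRel R M N') :
    ∃ b ∈ balRel R M N, (g.restrictScalars ℤ).lTensor M b = x := by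
  induction hx using Submodule.span_induction with
  | mem x hx =>
    obtain ⟨r, m, n', rfl⟩ := hx
    obtain ⟨n, rfl⟩ := hg n'
    exact ⟨_, Submodule.subset_span ⟨r, m, n, rfl⟩, by simp⟩
  | zero => exact ⟨0, zero_mem _, map_zero _⟩
  | add x y _ _ hx hy =>
    obtain ⟨b, hb, rfl⟩ := hx
    obtain ⟨c, hc, rfl⟩ := hy
    exact ⟨b + c, add_mem hb hc, map_add _ b c⟩
  | smul z x _ hx =>
    obtain ⟨b, hb, rfl⟩ := hx
    exact ⟨z • b, Submodule.smul_mem _ z hb, map_zsmul _ z b⟩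

lemma map_exact {f : N →ₗ[R] N'} {g : N' →ₗ[R] N''} (hfg : Function.Exact f g)
    (hg : Function.Surjective g) :
    Function.Exact (Bal.map R (LinearMap.id : M →ₗ[Rᵐᵒᵖ] M) f)
      (Bal.map R (LinearMap.id : M →ₗ[Rᵐᵒᵖ] M) g) := by
  have hT := lTensor_exact M (f := f.restrictScalars ℤ) (g := g.restrictScalars ℤ) hfg hg
  intro x
  obtain ⟨x, rfl⟩ := Submodule.Quotient.mk_surjective _ x
  constructor
  · intro hx
    rw [map_id_mk, Submodule.Quotient.mk_eq_zero] at hx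
    obtain ⟨b, hb, hbx⟩ := exists_mem_balRel_lTensor_eq R hg hx
    obtain ⟨y, hy⟩ := (hT (x - b)).mp (by rw [map_sub, hbx, sub_self])
    refine ⟨Submodule.Quotient.mk y, ?_⟩
    rw [map_id_mk, hy, Submodule.Quotient.eq]
    simpa using hb
  · rintro ⟨y, hy⟩
    obtain ⟨y, rfl⟩ := Submodule.Quotient.mk_surjective _ y
    rw [← hy, map_id_mk, map_id_mk, hT.apply_apply_eq_zero, Submodule.Quotient.mk_zero]

end Bal

variable {R : Type} [Ring R] in
lemma FlatModule.injective_characterModule {N : Type} [AddCommGroup N] [Module R N]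
    (hN : FlatModule R N) : Module.Injective Rᵐᵒᵖ (CharacterModule N) := by
  refine ⟨fun X Y _ _ _ _ f hf g => ?_⟩
  obtain ⟨c, hc⟩ := CharacterModule.dual_surjective_of_injective _ (hN X Y f hf)
    ((Bal.characterEquiv R).symm g)
  refine ⟨Bal.characterEquiv R c, fun x => ?_⟩
  have key := congrArg (Bal.characterEquiv R) hc
  rw [Bal.characterEquiv_dual_map, Equiv.apply_symm_apply] at key
  exact LinearMap.congr_fun key x

namespace CochainComplex

variable {A : Type} [Ring A] (C : Cx A)

lemma exactAt_iff_function_exact (i j k : ℤ) (hij : i + 1 = j) (hjk : j + 1 = k) :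
    C.ExactAt j ↔ Function.Exact (C.d i j) (C.d j k) := by
  rw [C.exactAt_iff' i j k ((ComplexShape.up ℤ).prev_eq' hij)
    ((ComplexShape.up ℤ).next_eq' hjk)]
  exact ShortComplex.ShortExact.moduleCat_exact_iff_function_exact _

lemma iCycles_injective (n : ℤ) : Function.Injective (C.iCycles n) :=
  (ModuleCat.mono_iff_injective _).mp inferInstance

lemma exact_iCycles_toCycles (n : ℤ) :
    Function.Exact (C.iCycles n) (C.toCycles n (n + 1)) := by
  have hker : (ShortComplex.mk _ _ (C.iCycles_d n (n + 1))).Exact :=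
    ShortComplex.exact_of_f_is_kernel _
      (C.cyclesIsKernel n (n + 1) ((ComplexShape.up ℤ).next_eq' rfl))
  rw [ShortComplex.ShortExact.moduleCat_exact_iff_function_exact] at hker
  rw [← (C.iCycles_injective (n + 1)).comp_exact_iff_exact, ← ModuleCat.hom_comp, C.toCycles_i]
  exact hker

lemma toCycles_surjective (hC : IsAcyclic A C) (i j : ℤ) (hij : i + 1 = j) :
    Function.Surjective (C.toCycles i j) := by
  intro z
  have hd : C.d j (j + 1) (C.iCycles j z) = 0 := by
    rw [← ModuleCat.comp_apply, C.iCycles_d]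
    rfl
  obtain ⟨x, hx⟩ := ((C.exactAt_iff_function_exact i j (j + 1) hij rfl).mp (hC j) _).mp hd
  refine ⟨x, C.iCycles_injective j ?_⟩
  rw [← ModuleCat.comp_apply, C.toCycles_i, hx]

end CochainComplex

section Homotopy

variable {A : Type} [Ring A]

open CochainComplex.HomComplex in
lemma nonempty_homotopy_id_zero_of_isAcyclicAb {I : Cx A}
    (hI : IsAcyclicAb (CochainComplex.HomComplex I I)) : Nonempty (Homotopy (𝟙 I) 0) := by
  have h0 := hI 0
  rw [HomologicalComplex.exactAt_iff' _ (-1) 0 1 ((ComplexShape.up ℤ).prev_eq' (by simp))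
    ((ComplexShape.up ℤ).next_eq' (by simp)), ShortComplex.ab_exact_iff] at h0
  obtain ⟨y, hy⟩ := h0 (Cochain.ofHom (𝟙 I)) (δ_ofHom (𝟙 I))
  have hy' : δ (-1) 0 y = Cochain.ofHom (𝟙 I) := hy
  exact ⟨(Cochain.equivHomotopy _ _).symm ⟨y, by simp [hy']⟩⟩

lemma Homotopy.d_hom_apply_of_d_apply_eq_zero {I : Cx A} (ho : Homotopy (𝟙 I) 0) (p : ℤ)
    {x : I.X (p + 1)} (hx : I.d (p + 1) (p + 1 + 1) x = 0) :
    I.d p (p + 1) (ho.hom (p + 1) p x) = x := by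
  have h := ho.comm (p + 1)
  rw [dNext_eq ho.hom (rfl : p + 1 + 1 = p + 1 + 1), prevD_eq ho.hom (rfl : p + 1 = p + 1)] at h
  have hx' := LinearMap.congr_fun (congrArg ModuleCat.Hom.hom h) x
  simpa [hx] using hx'.symm

end Homotopy

section CharacterComplex

variable {R : Type} [Ring R]

/-- `F⁺ = Hom_ℤ(F, ℚ/ℤ)`, reindexed by `n ↦ -n` so that it is again a cochain complex. -/
def characterComplex (F : Cx R) : Cx Rᵐᵒᵖ where
  X n := ModuleCat.of Rᵐᵒᵖ (CharacterModule (F.X (-n)))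
  d i j := ModuleCat.ofHom (F.d (-j) (-i)).hom.characterDual
  shape i j hij := by
    rw [F.shape (-j) (-i) (by simp only [ComplexShape.up_Rel] at hij ⊢; omega),
      ModuleCat.hom_zero, LinearMap.characterDual_zero]
    rfl
  d_comp_d' i j k _ _ := by
    rw [← ModuleCat.ofHom_comp, ← LinearMap.characterDual_comp, ← ModuleCat.hom_comp,
      F.d_comp_d, ModuleCat.hom_zero, LinearMap.characterDual_zero]
    rfl

lemma characterComplex_X_injective {F : Cx R} (hF : ∀ n, FlatModule R (F.X n)) (n : ℤ) :
    Module.Injective Rᵐᵒᵖ ((characterComplex F).X n) :=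
  (hF (-n)).injective_characterModule

lemma characterComplex_acyclic {F : Cx R} (hF : IsAcyclic R F) :
    IsAcyclic Rᵐᵒᵖ (characterComplex F) := by
  intro n
  rw [(characterComplex F).exactAt_iff_function_exact (n - 1) n (n + 1) (by omega) rfl]
  exact LinearMap.characterDual_exact
    ((F.exactAt_iff_function_exact (-(n + 1)) (-n) (-(n - 1)) (by omega) (by omega)).mp (hF (-n)))

lemma exists_characterDual_iCycles_comp_eq_id {F : Cx R} (hF : IsAcyclic R F)
    (ho : Homotopy (𝟙 (characterComplex F)) 0) (n : ℤ) :
    ∃ s : CharacterModule (F.cycles n) →ₗ[Rᵐᵒᵖ] CharacterModule (F.X n),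
      (F.iCycles n).hom.characterDual ∘ₗ s = LinearMap.id := by
  -- degree `-p` of `F` is degree `p` of `characterComplex F`
  obtain ⟨p, rfl⟩ : ∃ p, n = -p := ⟨-n, (neg_neg n).symm⟩
  let t := (F.toCycles (-(p + 1)) (-p)).hom.characterDual
  refine ⟨(ho.hom (p + 1) p).hom ∘ₗ t, LinearMap.ext fun φ => DFunLike.ext _ _ fun z => ?_⟩
  have ht : (characterComplex F).d (p + 1) (p + 1 + 1) (t φ) = 0 := by
    change (F.d _ _).hom.characterDual (t φ) = 0
    refine DFunLike.ext _ _ fun x => ?_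
    change φ (F.toCycles _ _ (F.d _ _ x)) = 0
    rw [← ModuleCat.comp_apply, F.d_toCycles]
    exact map_zero φ
  let ψ : CharacterModule (F.X (-p)) := ho.hom (p + 1) p (t φ)
  have hψ : (F.d (-(p + 1)) (-p)).hom.characterDual ψ = t φ :=
    ho.d_hom_apply_of_d_apply_eq_zero p ht
  obtain ⟨x, rfl⟩ := F.toCycles_surjective hF (-(p + 1)) (-p) (by omega) z
  change ψ (F.iCycles (-p) (F.toCycles _ _ x)) = φ (F.toCycles _ _ x)
  rw [← ModuleCat.comp_apply, F.toCycles_i]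
  exact DFunLike.congr_fun hψ x

end CharacterComplex

/-- **Remark 1.6.** If every acyclic complex of injective right `R`-modules is
semi-injective, then every acyclic complex of flat left `R`-modules is pure acyclic. -/
theorem I3_implies_F2 (R : Type) [Ring R]
    (h : ∀ I : Cx Rᵐᵒᵖ, (∀ n : ℤ, Module.Injective Rᵐᵒᵖ (I.X n)) → IsAcyclic Rᵐᵒᵖ I →
      SemiInjective I) :
    ∀ F : Cx R, (∀ n : ℤ, FlatModule R (F.X n)) → IsAcyclic R F → PureAcyclic R F := by
  intro F hflat hac
  have hacDual := characterComplex_acyclic hac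
  obtain ⟨ho⟩ := nonempty_homotopy_id_zero_of_isAcyclicAb
    ((h _ (characterComplex_X_injective hflat) hacDual).2 _ hacDual)
  refine ⟨hac, fun n M => ⟨?_, ?_, ?_⟩⟩
  · obtain ⟨s, hs⟩ := exists_characterDual_iCycles_comp_eq_id hac ho n
    exact Bal.map_injective_of_characterDual_comp_eq_id R _ hs
  · exact Bal.map_exact R (F.exact_iCycles_toCycles n) (F.toCycles_surjective hac n (n + 1) rfl)
  · exact Bal.map_surjective R Function.surjective_id (F.toCycles_surjective hac n (n + 1) rfl)

end
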